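/- Let ν be an infinite regular cardinal with ν^{<ν} = ν. For every ν-Baire subset A of ν^ν, the Banach–Mazur game G_ν(A) of length ν is determined: either player I or player II has a winning strategy in G_ν(A). -/

import Mathlib

universe u

noncomputable section

/-! ## Sequences of ordinals

`SeqLT o v` is the set `v^{<o}` of all sequences of ordinals `< v` of length `< o`
(for `o > 0`; values beyond the length are normalized to `0`).
`SeqFull o v` is the generalized Baire space `v^o` of all functions from ordinals `< o`
to ordinals `< v`. -/

/-- An element of `v^{<o}`: a sequence of ordinals `< v` of length `< o`. -/
structure SeqLT (o v : Ordinal.{u}) : Type (u + 1) where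
  len : Ordinal.{u}
  len_lt : len < o ⊔ 1
  val : Ordinal.{u} → Ordinal.{u}
  val_lt : ∀ β, β < len → val β < v
  val_zero : ∀ β, len ≤ β → val β = 0

namespace SeqLT

variable {o v : Ordinal.{u}}

/-- `s ⊆ t`, i.e. `t` end-extends `s`. -/
protected def le (s t : SeqLT o v) : Prop :=
  s.len ≤ t.len ∧ ∀ β, β < s.len → s.val β = t.val β

/-- `s ⊊ t`, i.e. `t` properly end-extends `s`. -/
protected def slt (s t : SeqLT o v) : Prop :=
  s.le t ∧ s.len < t.len

/-- The empty sequence. -/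
protected def empty (o v : Ordinal.{u}) : SeqLT o v where
  len := 0
  len_lt := lt_sup_iff.mpr (Or.inr zero_lt_one)
  val := fun _ => 0
  val_lt := fun β h => absurd h (not_lt_of_ge (show (0 : Ordinal.{u}) ≤ β from zero_le))
  val_zero := fun _ _ => rfl

/-- `s⌢⟨β⟩`: the sequence `s` extended by the single value `β`. -/
def snoc (s : SeqLT o v) (β : Ordinal.{u}) : SeqLT o v :=
  if h : s.len + 1 < o ⊔ 1 ∧ β < v then
    { len := s.len + 1
      len_lt := h.1
      val := fun γ => if γ = s.len then β else s.val γ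
      val_lt := fun γ hγ => by
        rcases eq_or_ne γ s.len with rfl | hne
        · simpa using h.2
        · simp only [if_neg hne]
          refine s.val_lt γ (lt_of_le_of_ne ?_ hne)
          rw [Ordinal.add_one_eq_succ] at hγ
          exact Order.lt_succ_iff.mp hγ
      val_zero := fun γ hγ => by
        have h1 : s.len < γ :=
          lt_of_lt_of_le (by rw [Ordinal.add_one_eq_succ]; exact Order.lt_succ s.len) hγ
        simp only [if_neg h1.ne']
        exact s.val_zero γ h1.le }
  else s

protected theorem le_refl (s : SeqLT o v) : s.le s :=
  ⟨le_rfl, fun _ _ => rfl⟩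

protected theorem le_trans {s t u : SeqLT o v} (h1 : s.le t) (h2 : t.le u) : s.le u :=
  ⟨h1.1.trans h2.1, fun β hβ => (h1.2 β hβ).trans (h2.2 β (lt_of_lt_of_le hβ h1.1))⟩

end SeqLT

/-- An element of the generalized Baire space `v^o`. -/
structure SeqFull (o v : Ordinal.{u}) : Type (u + 1) where
  val : Ordinal.{u} → Ordinal.{u}
  val_lt : ∀ β, β < o → val β < v
  val_zero : ∀ β, o ≤ β → val β = 0

/-- The restriction `x ↾ β` of `x : v^o` to an ordinal `β < o`. -/
def SeqFull.res {o v : Ordinal.{u}} (x : SeqFull o v) (β : Ordinal.{u}) : SeqLT o v :=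
  if h : β < o ⊔ 1 then
    { len := β
      len_lt := h
      val := fun γ => if γ < β then x.val γ else 0
      val_lt := fun γ hγ => by
        simp only [if_pos hγ]
        rcases lt_sup_iff.mp h with h' | h'
        · exact x.val_lt γ (hγ.trans h')
        · rw [Ordinal.lt_one_iff_zero] at h'
          exact absurd (h' ▸ hγ) (not_lt_of_ge (show (0 : Ordinal.{u}) ≤ γ from zero_le))
      val_zero := fun γ hγ => if_neg (not_lt.mpr hγ) }
  else SeqLT.empty o v

/-- `s ⊆ x`: the sequence `s` is an initial segment of `x : v^o`. -/
def SeqLT.prefixOf {o v : Ordinal.{u}} (s : SeqLT o v) (x : SeqFull o v) : Prop :=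
  ∀ β, β < s.len → s.val β = x.val β

/-! ## The bounded topology -/

/-- The basic open set `N_t`. -/
def basicOpen {o v : Ordinal.{u}} (t : SeqLT o v) : Set (SeqFull o v) :=
  {x | t.prefixOf x}

/-- The bounded (standard) topology on the generalized Baire space, generated by the
basic open sets `N_t`. -/
instance (o v : Ordinal.{u}) : TopologicalSpace (SeqFull o v) :=
  TopologicalSpace.generateFrom {U | ∃ t : SeqLT o v, U = basicOpen t}

/-- `A` is a nowhere dense subset of `B` (in the subspace topology on `B`). -/
def NowhereDenseIn {o v : Ordinal.{u}} (A B : Set (SeqFull o v)) : Prop :=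
  A ⊆ B ∧ interior (closure {x : ↥B | (x : SeqFull o v) ∈ A}) = ∅

/-- `A` is `o`-meager in `B`: `A ∩ B` is the union of (card of) `o` many nowhere dense
subsets of `B`. -/
def MeagerIn {o v : Ordinal.{u}} (A B : Set (SeqFull o v)) : Prop :=
  ∃ F : {β : Ordinal.{u} // β < o} → Set (SeqFull o v),
    (∀ i, NowhereDenseIn (F i) B) ∧ A ∩ B = ⋃ i, F i

/-- `A` is comeager in `B`: `B \ A` is meager in `B`. -/
def ComeagerIn {o v : Ordinal.{u}} (A B : Set (SeqFull o v)) : Prop :=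
  MeagerIn (B \ A) B

/-- `A` has the `o`-Baire property: for some open `U`, `A △ U` is meager. -/
def BaireSet {o v : Ordinal.{u}} (A : Set (SeqFull o v)) : Prop :=
  ∃ U : Set (SeqFull o v), IsOpen U ∧ MeagerIn (symmDiff A U) Set.univ

/-! ## Homomorphisms of `v^{<o}` -/

/-- A homomorphism: strictly extension-preserving map of `v^{<o}` to itself. -/
def IsHom {o v : Ordinal.{u}} (f : SeqLT o v → SeqLT o v) : Prop :=
  ∀ s t : SeqLT o v, s.slt t → (f s).slt (f t)

/-- `f` is dense: for every `s` and every `t ⊇ f(s)` there is `β < v` with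
`f(s⌢⟨β⟩) ⊇ t`. -/
def IsDenseMap {o v : Ordinal.{u}} (f : SeqLT o v → SeqLT o v) : Prop :=
  ∀ s t : SeqLT o v, (f s).le t → ∃ β, β < v ∧ t.le (f (s.snoc β))

/-- `u = ⋃_{α<γ} s α` for a chain `s`. -/
def IsUnionOfChain {o v : Ordinal.{u}} (u : SeqLT o v) (γ : Ordinal.{u})
    (s : Ordinal.{u} → SeqLT o v) : Prop :=
  (∀ α, α < γ → (s α).le u) ∧ ∀ β, β < u.len → ∃ α, α < γ ∧ β < (s α).len

/-- `f` is continuous: for every limit `γ < o` and every strictly increasing sequence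
`⟨s_α : α < γ⟩`, `f(⋃_{α<γ} s_α) = ⋃_{α<γ} f(s_α)`. -/
def IsContinuousMap {o v : Ordinal.{u}} (f : SeqLT o v → SeqLT o v) : Prop :=
  ∀ γ : Ordinal.{u}, Order.IsSuccLimit γ → γ < o →
    ∀ s : Ordinal.{u} → SeqLT o v, (∀ α β, α < β → β < γ → (s α).slt (s β)) →
      ∀ u : SeqLT o v, IsUnionOfChain u γ s → IsUnionOfChain (f u) γ fun α => f (s α)

/-- `y = f*(x) = ⋃_{α<o} f(x↾α)` for a homomorphism `f`. -/
def FStarVal {o v : Ordinal.{u}} (f : SeqLT o v → SeqLT o v) (x y : SeqFull o v) : Prop :=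
  (∀ α, α < o → (f (x.res α)).prefixOf y) ∧
    ∀ β, β < o → ∃ α, α < o ∧ β < (f (x.res α)).len

/-! ## Clubs and the almost Baire property -/

/-- `C` is a club (closed unbounded set) in the ordinal `o`. -/
def IsClubIn (C : Set Ordinal.{u}) (o : Ordinal.{u}) : Prop :=
  (∀ γ ∈ C, γ < o) ∧ (∀ β, β < o → ∃ γ ∈ C, β ≤ γ) ∧
    ∀ β, β < o → 0 < β → (∀ γ, γ < β → ∃ ξ ∈ C, γ < ξ ∧ ξ < β) → β ∈ C

/-- The set of functions coding elements of the club filter as characteristic functions. -/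
def ClSet (o v : Ordinal.{u}) : Set (SeqFull o v) :=
  {x | ∃ C : Set Ordinal.{u}, IsClubIn C o ∧ ∀ i ∈ C, x.val i ≠ 0}

/-- The set of functions coding elements of the nonstationary ideal. -/
def NsSet (o v : Ordinal.{u}) : Set (SeqFull o v) :=
  {x | ∃ C : Set Ordinal.{u}, IsClubIn C o ∧ ∀ i ∈ C, x.val i = 0}

/-- `A` is almost Baire: there is a dense homomorphism `f` with `ran f* ⊆ A`, or a dense
continuous homomorphism `f` with `f ∅ = ∅` and `ran f* ⊆ Aᶜ`. -/
def AlmostBaire {o v : Ordinal.{u}} (A : Set (SeqFull o v)) : Prop :=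
  ∃ f : SeqLT o v → SeqLT o v, IsHom f ∧ IsDenseMap f ∧
    ((∀ x y, FStarVal f x y → y ∈ A) ∨
      ((∀ x y, FStarVal f x y → y ∉ A) ∧ IsContinuousMap f ∧
        f (SeqLT.empty o v) = SeqLT.empty o v))

/-! ## Banach–Mazur games of length `o`

A run of the game is a strictly increasing sequence `⟨s_α : α < o⟩` in `v^{<o}`;
player I plays at even positions (`0` and limits count as even), player II at odd ones.
In the game `G^t` the first move of player I must extend `t`; taking `t = ∅` gives the
plain Banach–Mazur game. -/

/-- `γ` is an even ordinal (`0` and limits are even). -/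
def EvenOrd (γ : Ordinal.{u}) : Prop := ∃ δ : Ordinal.{u}, γ = 2 * δ

/-- `γ` is an odd ordinal. -/
def OddOrd (γ : Ordinal.{u}) : Prop := ∃ δ : Ordinal.{u}, γ = 2 * δ + 1

/-- The moves of a (partial) run, as a function on ordinals. -/
abbrev Play (o v : Ordinal.{u}) := Ordinal.{u} → SeqLT o v

/-- A strategy: given the length of the current position and the moves so far,
produce the next move. -/
abbrev Strat (o v : Ordinal.{u}) := Ordinal.{u} → Play o v → SeqLT o v

/-- `p` is a legal partial run of length `γ` of the game `G^t`: strictly increasing moves,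
the first move extends `t`, and the moves beyond `γ` are normalized to `∅`. -/
def IsPos {o v : Ordinal.{u}} (t : SeqLT o v) (p : Play o v) (γ : Ordinal.{u}) : Prop :=
  (∀ α β, α < β → β < γ → (p α).slt (p β)) ∧ (0 < γ → t.le (p 0)) ∧
    ∀ α, γ ≤ α → p α = SeqLT.empty o v

/-- The restriction of a run to its first `γ` moves. -/
def resPlay {o v : Ordinal.{u}} (p : Play o v) (γ : Ordinal.{u}) : Play o v :=
  fun α => if α < γ then p α else SeqLT.empty o v

/-- `m` is a legal move at the position `p` of length `γ` in the game `G^t`. -/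
def MoveOK {o v : Ordinal.{u}} (t : SeqLT o v) (p : Play o v) (γ : Ordinal.{u})
    (m : SeqLT o v) : Prop :=
  (∀ α, α < γ → (p α).slt m) ∧ (γ = 0 → t.le m)

/-- `σ` is a strategy for player I in `G^t`: it assigns a legal move to every legal
position of even length. -/
def LegalI {o v : Ordinal.{u}} (t : SeqLT o v) (σ : Strat o v) : Prop :=
  ∀ γ, γ < o → EvenOrd γ → ∀ p, IsPos t p γ → MoveOK t p γ (σ γ p)

/-- `σ` is a strategy for player II in `G^t`: it assigns a legal move to every legal
position of odd length. -/
def LegalII {o v : Ordinal.{u}} (t : SeqLT o v) (σ : Strat o v) : Prop :=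
  ∀ γ, γ < o → OddOrd γ → ∀ p, IsPos t p γ → MoveOK t p γ (σ γ p)

/-- The first `γ` moves of `p` follow the strategy `σ` of player I. -/
def FollowsI {o v : Ordinal.{u}} (σ : Strat o v) (p : Play o v) (γ : Ordinal.{u}) : Prop :=
  ∀ α, α < γ → EvenOrd α → p α = σ α (resPlay p α)

/-- The first `γ` moves of `p` follow the strategy `σ` of player II. -/
def FollowsII {o v : Ordinal.{u}} (σ : Strat o v) (p : Play o v) (γ : Ordinal.{u}) : Prop :=
  ∀ α, α < γ → OddOrd α → p α = σ α (resPlay p α)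

/-- `x = ⋃_{α<o} p α` is the outcome of the complete run `p`. -/
def IsOutcome {o v : Ordinal.{u}} (p : Play o v) (x : SeqFull o v) : Prop :=
  (∀ α, α < o → (p α).prefixOf x) ∧ ∀ β, β < o → ∃ α, α < o ∧ β < (p α).len

/-- Player I has a winning strategy in the Banach–Mazur game `G^t(A)` of length `o`. -/
def WinIStrat {o v : Ordinal.{u}} (t : SeqLT o v) (A : Set (SeqFull o v)) : Prop :=
  ∃ σ : Strat o v, LegalI t σ ∧
    ∀ p : Play o v, IsPos t p o → FollowsI σ p o → ∃ x, IsOutcome p x ∧ x ∈ A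

/-- Player II has a winning strategy in the Banach–Mazur game `G^t(A)` of length `o`. -/
def WinIIStrat {o v : Ordinal.{u}} (t : SeqLT o v) (A : Set (SeqFull o v)) : Prop :=
  ∃ σ : Strat o v, LegalII t σ ∧
    ∀ p : Play o v, IsPos t p o → FollowsII σ p o → ∃ x, IsOutcome p x ∧ x ∉ A

/-- `σ` is a tactic for player II: its moves depend only on the union of the previous moves. -/
def IsTacticII {o v : Ordinal.{u}} (t : SeqLT o v) (σ : Strat o v) : Prop :=
  ∃ f : SeqLT o v → SeqLT o v, ∀ γ, γ < o → OddOrd γ → ∀ p, IsPos t p γ →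
    ∀ u, IsUnionOfChain u γ p → σ γ p = f u

/-- Player II has a winning tactic in the Banach–Mazur game `G^t(A)` of length `o`. -/
def WinIITactic {o v : Ordinal.{u}} (t : SeqLT o v) (A : Set (SeqFull o v)) : Prop :=
  ∃ σ : Strat o v, LegalII t σ ∧ IsTacticII t σ ∧
    ∀ p : Play o v, IsPos t p o → FollowsII σ p o → ∃ x, IsOutcome p x ∧ x ∉ A

/-! ## Trees and perfect sets -/

/-- A subtree of `v^{<o}`: a downwards closed set of sequences. -/
def IsSubtree {o v : Ordinal.{u}} (T : Set (SeqLT o v)) : Prop :=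
  ∀ s ∈ T, ∀ r : SeqLT o v, r.le s → r ∈ T

/-- `T` is closed: every strictly increasing sequence in `T` of length `< o` has an
upper bound in `T`. -/
def TreeClosed {o v : Ordinal.{u}} (T : Set (SeqLT o v)) : Prop :=
  ∀ γ : Ordinal.{u}, γ < o → ∀ s : Ordinal.{u} → SeqLT o v,
    (∀ α β, α < β → β < γ → (s α).slt (s β)) → (∀ α, α < γ → s α ∈ T) →
      ∃ b ∈ T, ∀ α, α < γ → (s α).le b

/-- `t` is a direct successor of `s`. -/
def IsDirectSucc {o v : Ordinal.{u}} (s t : SeqLT o v) : Prop :=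
  s.slt t ∧ t.len = s.len + 1

/-- `T` is a perfect tree: a (nonempty) closed subtree whose splitting nodes are cofinal. -/
def IsPerfectTree {o v : Ordinal.{u}} (T : Set (SeqLT o v)) : Prop :=
  T.Nonempty ∧ IsSubtree T ∧ TreeClosed T ∧
    ∀ s ∈ T, ∃ t ∈ T, s.le t ∧
      ∃ t₁ ∈ T, ∃ t₂ ∈ T, IsDirectSucc t t₁ ∧ IsDirectSucc t t₂ ∧ t₁ ≠ t₂

/-- The body `[T]` of a tree `T`: the set of branches of length `o` through `T`. -/
def treeBody {o v : Ordinal.{u}} (T : Set (SeqLT o v)) : Set (SeqFull o v) :=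
  {x | ∀ α, α < o → x.res α ∈ T}

/-!
Write `A △ U = ⋃_{δ<ν} F_δ` with `U` open and every `F_δ` nowhere dense. Since `ν` is regular,
every position of length `< ν` has an upper bound, and any node can be extended into a basic
open set missing a given nowhere dense set. If `U = ∅`, then `A` is meager and player II wins by
avoiding `F_δ` at move `2δ + 1`. Otherwise `U ⊇ N_s` for some `s`; player I opens with `s` and
avoids `F_δ` at move `2(δ + 1)`, so the outcome lies in `N_s \ ⋃_δ F_δ ⊆ A`.
-/

open Set Order

namespace SeqLT

variable {o v : Ordinal.{u}}

theorem slt_of_le_of_slt {s t w : SeqLT o v} (hst : s.le t) (htw : t.slt w) : s.slt w :=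
  ⟨SeqLT.le_trans hst htw.1, hst.1.trans_lt htw.2⟩

theorem empty_le (s : SeqLT o v) : (SeqLT.empty o v).le s :=
  ⟨zero_le, fun _ hβ => absurd hβ not_lt_zero⟩

theorem len_lt_of_one_lt (ho : 1 < o) (s : SeqLT o v) : s.len < o := by
  simpa [sup_eq_left.mpr ho.le] using s.len_lt

theorem slt_snoc_zero (ho : IsSuccLimit o) (hv : 0 < v) (s : SeqLT o v) : s.slt (s.snoc 0) := by
  have hlen : s.len + 1 < o ⊔ 1 := by
    rw [sup_eq_left.mpr (Ordinal.one_lt_of_isSuccLimit ho).le, ← Order.succ_eq_add_one]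
    exact ho.succ_lt (s.len_lt_of_one_lt (Ordinal.one_lt_of_isSuccLimit ho))
  simp only [SeqLT.slt, SeqLT.le, SeqLT.snoc, dif_pos (And.intro hlen hv)]
  exact ⟨⟨(Order.lt_add_one_iff.mpr le_rfl).le, fun β hβ => (if_neg hβ.ne).symm⟩,
    Order.lt_add_one_iff.mpr le_rfl⟩

theorem prefixOf_of_le {s t : SeqLT o v} {x : SeqFull o v} (hst : s.le t)
    (ht : t.prefixOf x) : s.prefixOf x :=
  fun β hβ => (hst.2 β hβ).trans (ht β (hβ.trans_le hst.1))

theorem le_of_prefixOf {s t : SeqLT o v} {x : SeqFull o v} (hs : s.prefixOf x)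
    (ht : t.prefixOf x) (hlen : s.len ≤ t.len) : s.le t :=
  ⟨hlen, fun β hβ => (hs β hβ).trans (ht β (hβ.trans_le hlen)).symm⟩

end SeqLT

section Topology

variable {o v : Ordinal.{u}}

theorem basicOpen_subset_basicOpen {s t : SeqLT o v} (hst : s.le t) :
    basicOpen t ⊆ basicOpen s :=
  fun _ => SeqLT.prefixOf_of_le hst

theorem basicOpen_empty : basicOpen (SeqLT.empty o v) = univ :=
  eq_univ_of_forall fun _ _ hβ => absurd hβ not_lt_zero

theorem basicOpen_nonempty (ho : 1 < o) (hv : 0 < v) (s : SeqLT o v) :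
    (basicOpen s).Nonempty :=
  ⟨{ val := s.val
     val_lt := fun β _ => by
       rcases lt_or_ge β s.len with h | h
       · exact s.val_lt β h
       · rwa [s.val_zero β h]
     val_zero := fun β hβ => s.val_zero β ((s.len_lt_of_one_lt ho).le.trans hβ) },
    fun _ _ => rfl⟩

theorem isTopologicalBasis_basicOpen :
    TopologicalSpace.IsTopologicalBasis {U : Set (SeqFull o v) | ∃ t, U = basicOpen t} := by
  refine ⟨?_, ?_, rfl⟩
  · rintro _ ⟨s, rfl⟩ _ ⟨t, rfl⟩ x ⟨hxs, hxt⟩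
    rcases le_total s.len t.len with h | h
    · exact ⟨basicOpen t, ⟨t, rfl⟩, hxt,
        subset_inter (basicOpen_subset_basicOpen (SeqLT.le_of_prefixOf hxs hxt h)) subset_rfl⟩
    · exact ⟨basicOpen s, ⟨s, rfl⟩, hxs,
        subset_inter subset_rfl (basicOpen_subset_basicOpen (SeqLT.le_of_prefixOf hxt hxs h))⟩
  · exact sUnion_eq_univ_iff.mpr fun x => ⟨_, ⟨_, rfl⟩, basicOpen_empty.symm ▸ mem_univ x⟩

theorem isOpen_basicOpen (t : SeqLT o v) : IsOpen (basicOpen t) :=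
  TopologicalSpace.isOpen_generateFrom_of_mem ⟨t, rfl⟩

theorem NowhereDenseIn.isNowhereDense {F B : Set (SeqFull o v)} (hF : NowhereDenseIn F B) :
    IsNowhereDense F := by
  have himage : Subtype.val '' {x : B | (x : SeqFull o v) ∈ F} = F := by
    ext y
    exact ⟨fun ⟨_, hz, hzy⟩ => hzy ▸ hz, fun hy => ⟨⟨y, hF.1 hy⟩, hy, rfl⟩⟩
  simpa only [himage] using IsNowhereDense.image_val hF.2

theorem exists_le_disjoint_basicOpen (ho : 1 < o) (hv : 0 < v) {F : Set (SeqFull o v)}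
    (hF : IsNowhereDense F) (s : SeqLT o v) :
    ∃ m, s.le m ∧ Disjoint (basicOpen m) F := by
  by_contra! hmeets
  have hsub : basicOpen s ⊆ closure F := fun x hxs => by
    rw [isTopologicalBasis_basicOpen.mem_closure_iff]
    rintro _ ⟨t, rfl⟩ hxt
    rcases le_total s.len t.len with h | h
    · exact not_disjoint_iff_nonempty_inter.mp (hmeets t (SeqLT.le_of_prefixOf hxs hxt h))
    · exact (not_disjoint_iff_nonempty_inter.mp (hmeets s (SeqLT.le_refl s))).mono
        (inter_subset_inter_left F
          (basicOpen_subset_basicOpen (SeqLT.le_of_prefixOf hxt hxs h)))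
  obtain ⟨x, hx⟩ := basicOpen_nonempty ho hv s
  have := interior_maximal hsub (isOpen_basicOpen s) hx
  rwa [hF] at this

end Topology

section Chains

variable {o v : Ordinal.{u}}

def chainUnionVal (p : Play o v) (γ β : Ordinal.{u}) : Ordinal.{u} :=
  open Classical in
  if h : ∃ α < γ, β < (p α).len then (p h.choose).val β else 0

variable {p : Play o v} {γ : Ordinal.{u}}

theorem chainUnionVal_eq (hp : ∀ α β, α < β → β < γ → (p α).slt (p β)) {α β : Ordinal.{u}}
    (hα : α < γ) (hβ : β < (p α).len) : chainUnionVal p γ β = (p α).val β := by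
  have h : ∃ α < γ, β < (p α).len := ⟨α, hα, hβ⟩
  rw [chainUnionVal, dif_pos h]
  obtain ⟨hα', hβ'⟩ := h.choose_spec
  rcases lt_trichotomy h.choose α with hlt | heq | hlt
  · exact (hp _ _ hlt hα).1.2 β hβ'
  · rw [heq]
  · exact ((hp _ _ hlt hα').1.2 β hβ).symm

theorem chainUnionVal_eq_zero {β : Ordinal.{u}} (hβ : ∀ α < γ, (p α).len ≤ β) :
    chainUnionVal p γ β = 0 :=
  dif_neg fun ⟨α, hα, hβα⟩ => (hβα.trans_le (hβ α hα)).false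

theorem le_len_of_chain (hp : ∀ α β, α < β → β < γ → (p α).slt (p β)) {α : Ordinal.{u}}
    (hα : α < γ) : α ≤ (p α).len := by
  induction α using WellFoundedLT.induction with
  | _ α ih =>
    exact le_of_forall_lt fun β hβ =>
      (ih β hβ (hβ.trans hα)).trans_lt (hp β α hβ hα).2

theorem exists_bound_of_isRegular {ν : Cardinal.{u}} (hreg : ν.IsRegular) (hγ : γ < ν.ord)
    (f : Ordinal.{u} → Ordinal.{u}) (hf : ∀ α < γ, f α < ν.ord) :
    ∃ b < ν.ord, ∀ α < γ, f α ≤ b := by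
  let g : γ.ToType → Ordinal.{u} := fun i => f (Ordinal.ToType.mk.symm i)
  refine ⟨⨆ i, g i, Ordinal.iSup_lt_of_lt_cof ?_ fun i => hf _ (Ordinal.ToType.mk.symm i).2,
    fun α hα => ?_⟩
  · rwa [Cardinal.mk_toType, hreg.cof_ord, ← Cardinal.lt_ord]
  · simpa [g] using Ordinal.le_iSup g (Ordinal.ToType.mk ⟨α, hα⟩)

theorem exists_upper_bound_of_chain {ν : Cardinal.{u}} {p : Play ν.ord v} (hreg : ν.IsRegular)
    (hv : 0 < v) (hγ : γ < ν.ord) (hp : ∀ α β, α < β → β < γ → (p α).slt (p β)) :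
    ∃ w : SeqLT ν.ord v, ∀ α < γ, (p α).le w := by
  have hone : 1 < ν.ord := Ordinal.one_lt_of_isSuccLimit (Cardinal.isSuccLimit_ord hreg.aleph0_le)
  obtain ⟨b, hb, hbound⟩ := exists_bound_of_isRegular hreg hγ (fun α => (p α).len)
    fun α _ => (p α).len_lt_of_one_lt hone
  refine ⟨{ len := b
            len_lt := lt_sup_of_lt_left hb
            val := chainUnionVal p γ
            val_lt := fun β _ => ?_
            val_zero := fun β hβ => chainUnionVal_eq_zero fun α hα => (hbound α hα).trans hβ },
    fun α hα => ⟨hbound α hα, fun β hβ => (chainUnionVal_eq hp hα hβ).symm⟩⟩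
  by_cases h : ∃ α < γ, β < (p α).len
  · obtain ⟨α, hα, hβ⟩ := h
    exact chainUnionVal_eq hp hα hβ ▸ (p α).val_lt β hβ
  · exact chainUnionVal_eq_zero (fun α hα => not_lt.mp fun hβ => h ⟨α, hα, hβ⟩) ▸ hv

end Chains

section Game

variable {o v : Ordinal.{u}} {t : SeqLT o v} {p : Play o v} {γ : Ordinal.{u}}

theorem IsPos.resPlay (hp : IsPos t p o) (hγ : γ ≤ o) : IsPos t (resPlay p γ) γ := by
  refine ⟨fun α β hαβ hβ => ?_, fun h0 => ?_, fun α hα => if_neg (not_lt.mpr hα)⟩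
  · simp only [_root_.resPlay, if_pos (hαβ.trans hβ), if_pos hβ]
    exact hp.1 α β hαβ (hβ.trans_le hγ)
  · simp only [_root_.resPlay, if_pos h0]
    exact hp.2.1 (h0.trans_le hγ)

theorem IsPos.exists_isOutcome (ho : IsSuccLimit o) (hp : IsPos t p o) :
    ∃ x, IsOutcome p x := by
  have hone : 1 < o := Ordinal.one_lt_of_isSuccLimit ho
  have hcover : ∀ β < o, ∃ α < o, β < (p α).len := fun β hβ =>
    ⟨β + 1, succ_eq_add_one β ▸ ho.succ_lt hβ,
      (le_len_of_chain hp.1 hβ).trans_lt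
        (hp.1 β (β + 1) (lt_add_one β) (succ_eq_add_one β ▸ ho.succ_lt hβ)).2⟩
  refine ⟨{ val := chainUnionVal p o
            val_lt := fun β hβ => ?_
            val_zero := fun β hβ => chainUnionVal_eq_zero fun α _ =>
              ((p α).len_lt_of_one_lt hone).le.trans hβ },
    fun α hα β hβ => (chainUnionVal_eq hp.1 hα hβ).symm, hcover⟩
  obtain ⟨α, hα, hβα⟩ := hcover β hβ
  exact chainUnionVal_eq hp.1 hα hβα ▸ (p α).val_lt β hβα

theorem exists_strategy_of_forall_exists_moveOK (Mover : Ordinal.{u} → Prop)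
    (Q : Ordinal.{u} → SeqLT o v → Prop)
    (hmove : ∀ γ < o, Mover γ → ∀ p, IsPos t p γ → ∃ m, MoveOK t p γ m ∧ Q γ m) :
    ∃ σ : Strat o v, (∀ γ, γ < o → Mover γ → ∀ p, IsPos t p γ → MoveOK t p γ (σ γ p)) ∧
      ∀ p, IsPos t p o → (∀ α, α < o → Mover α → p α = σ α (resPlay p α)) →
        ∀ α < o, Mover α → Q α (p α) := by
  classical
  let σ : Strat o v := fun γ p =>
    if h : ∃ m, MoveOK t p γ m ∧ Q γ m then h.choose else SeqLT.empty o v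
  have hσ : ∀ γ < o, Mover γ → ∀ p, IsPos t p γ → MoveOK t p γ (σ γ p) ∧ Q γ (σ γ p) :=
    fun γ hγ hM p hp => by
      simpa only [σ, dif_pos (hmove γ hγ hM p hp)] using (hmove γ hγ hM p hp).choose_spec
  refine ⟨σ, fun γ hγ hM p hp => (hσ γ hγ hM p hp).1, fun p hp hfollow α hα hM => ?_⟩
  rw [hfollow α hα hM]
  exact (hσ α hα hM _ (hp.resPlay hα.le)).2

end Game

section Regular

variable {ν : Cardinal.{u}} {v : Ordinal.{u}} {t : SeqLT ν.ord v} {p : Play ν.ord v}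
  {γ : Ordinal.{u}}

theorem two_mul_lt_ord (hν : Cardinal.aleph0 ≤ ν) {a : Ordinal.{u}} (ha : a < ν.ord) :
    2 * a < ν.ord :=
  Ordinal.isPrincipal_mul_ord hν
    ((Ordinal.natCast_lt_omega0 2).trans_le (Cardinal.omega0_le_ord.mpr hν)) ha

theorem IsPos.exists_upper_bound (hreg : ν.IsRegular) (hv : 0 < v) (hp : IsPos t p γ)
    (hγ : γ < ν.ord) : ∃ w, t.le w ∧ ∀ α < γ, (p α).le w := by
  rcases eq_or_ne γ 0 with rfl | hγ0
  · exact ⟨t, SeqLT.le_refl t, fun α hα => absurd hα not_lt_zero⟩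
  · obtain ⟨w, hw⟩ := exists_upper_bound_of_chain hreg hv hγ hp.1
    have h0 : 0 < γ := pos_iff_ne_zero.mpr hγ0
    exact ⟨w, SeqLT.le_trans (hp.2.1 h0) (hw 0 h0), hw⟩

theorem IsPos.exists_moveOK_disjoint (hreg : ν.IsRegular) (hv : 0 < v) (hp : IsPos t p γ)
    (hγ : γ < ν.ord) {F : Set (SeqFull ν.ord v)} (hF : IsNowhereDense F) :
    ∃ m, MoveOK t p γ m ∧ Disjoint (basicOpen m) F := by
  have hlim := Cardinal.isSuccLimit_ord hreg.aleph0_le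
  obtain ⟨w, htw, hw⟩ := hp.exists_upper_bound hreg hv hγ
  obtain ⟨m, hwm, hm⟩ :=
    exists_le_disjoint_basicOpen (Ordinal.one_lt_of_isSuccLimit hlim) hv hF w
  have hsnoc := m.slt_snoc_zero hlim hv
  refine ⟨m.snoc 0, ⟨fun α hα => ?_, fun _ => ?_⟩,
    hm.mono_left (basicOpen_subset_basicOpen hsnoc.1)⟩
  · exact SeqLT.slt_of_le_of_slt (SeqLT.le_trans (hw α hα) hwm) hsnoc
  · exact SeqLT.le_trans (SeqLT.le_trans htw hwm) hsnoc.1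

theorem IsPos.exists_moveOK_forall_disjoint (hreg : ν.IsRegular) (hv : 0 < v)
    (hp : IsPos t p γ) (hγ : γ < ν.ord) {ι : Type*} {g : ι → Ordinal.{u}}
    (hg : Function.Injective g) {F : ι → Set (SeqFull ν.ord v)} (hF : ∀ i, IsNowhereDense (F i)) :
    ∃ m, MoveOK t p γ m ∧ ∀ i, g i = γ → Disjoint (basicOpen m) (F i) := by
  by_cases h : ∃ i, g i = γ
  · obtain ⟨i, rfl⟩ := h
    obtain ⟨m, hm, hdisj⟩ := hp.exists_moveOK_disjoint hreg hv hγ (hF i)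
    exact ⟨m, hm, fun j hj => hg hj ▸ hdisj⟩
  · obtain ⟨m, hm, -⟩ := hp.exists_moveOK_disjoint hreg hv hγ isNowhereDense_empty
    exact ⟨m, hm, fun i hi => absurd ⟨i, hi⟩ h⟩

theorem winIIStrat_of_meagerIn_univ (hreg : ν.IsRegular) (hv : 0 < v) (t : SeqLT ν.ord v)
    {A : Set (SeqFull ν.ord v)} (hA : MeagerIn A univ) : WinIIStrat t A := by
  obtain ⟨F, hF, hAF⟩ := hA
  have hν := hreg.aleph0_le
  let g : {β // β < ν.ord} → Ordinal.{u} := fun i => 2 * i + 1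
  have hg : StrictMono g := fun i j hij => by
    simpa [g] using (mul_lt_mul_iff_right₀ zero_lt_two).mpr (Subtype.coe_lt_coe.mpr hij)
  have hg_lt : ∀ i, g i < ν.ord := fun i =>
    (Cardinal.isSuccLimit_ord hν).add_one_lt (two_mul_lt_ord hν i.2)
  obtain ⟨σ, hlegal, hσ⟩ := exists_strategy_of_forall_exists_moveOK (t := t) OddOrd
    (fun γ m => ∀ i, g i = γ → Disjoint (basicOpen m) (F i))
    fun γ hγ _ p hp => hp.exists_moveOK_forall_disjoint hreg hv hγ hg.injective
      fun i => (hF i).isNowhereDense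
  refine ⟨σ, hlegal, fun p hp hfollow => ?_⟩
  obtain ⟨x, hx⟩ := hp.exists_isOutcome (Cardinal.isSuccLimit_ord hν)
  refine ⟨x, hx, fun hxA => ?_⟩
  obtain ⟨i, hxi⟩ := mem_iUnion.mp (hAF ▸ mem_inter hxA (mem_univ x))
  exact disjoint_left.mp (hσ p hp hfollow (g i) (hg_lt i) ⟨i, rfl⟩ i rfl)
    (hx.1 (g i) (hg_lt i)) hxi

theorem winIStrat_of_basicOpen_diff_subset (hreg : ν.IsRegular) (hv : 0 < v)
    {F : {β // β < ν.ord} → Set (SeqFull ν.ord v)} (hF : ∀ i, IsNowhereDense (F i))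
    {s : SeqLT ν.ord v} (hts : t.le s) {A : Set (SeqFull ν.ord v)}
    (hA : basicOpen s \ ⋃ i, F i ⊆ A) : WinIStrat t A := by
  have hν := hreg.aleph0_le
  have hlim := Cardinal.isSuccLimit_ord hν
  let g : {β // β < ν.ord} → Ordinal.{u} := fun i => 2 * (i + 1)
  have hg : StrictMono g := fun i j hij =>
    (mul_lt_mul_iff_right₀ zero_lt_two).mpr (by simpa using Subtype.coe_lt_coe.mpr hij)
  have hg_lt : ∀ i, g i < ν.ord := fun i => two_mul_lt_ord hν (hlim.add_one_lt i.2)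
  have hg_ne : ∀ i, g i ≠ 0 := fun i => mul_ne_zero two_ne_zero (add_pos_of_right one_pos _).ne'
  obtain ⟨σ, hlegal, hσ⟩ := exists_strategy_of_forall_exists_moveOK (t := t) EvenOrd
    (fun γ m => (γ = 0 → s.le m) ∧ ∀ i, g i = γ → Disjoint (basicOpen m) (F i))
    fun γ hγ _ p hp => by
      rcases eq_or_ne γ 0 with rfl | hγ0
      · exact ⟨s, ⟨fun α hα => absurd hα not_lt_zero, fun _ => hts⟩,
          fun _ => SeqLT.le_refl s, fun i hi => absurd hi (hg_ne i)⟩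
      · obtain ⟨m, hm, hdisj⟩ := hp.exists_moveOK_forall_disjoint hreg hv hγ hg.injective hF
        exact ⟨m, hm, fun h0 => absurd h0 hγ0, hdisj⟩
  refine ⟨σ, hlegal, fun p hp hfollow => ?_⟩
  obtain ⟨x, hx⟩ := hp.exists_isOutcome hlim
  have hpos : 0 < ν.ord := hlim.bot_lt
  refine ⟨x, hx, hA ⟨?_, fun hxF => ?_⟩⟩
  · exact basicOpen_subset_basicOpen ((hσ p hp hfollow 0 hpos ⟨0, (mul_zero 2).symm⟩).1 rfl)
      (hx.1 0 hpos)
  · obtain ⟨i, hxi⟩ := mem_iUnion.mp hxF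
    exact disjoint_left.mp ((hσ p hp hfollow (g i) (hg_lt i) ⟨i + 1, rfl⟩).2 i rfl)
      (hx.1 (g i) (hg_lt i)) hxi

end Regular

theorem statement17_general (ν : Cardinal.{u}) (hreg : ν.IsRegular)
    (A : Set (SeqFull ν.ord ν.ord)) (hA : BaireSet A) :
    WinIStrat (SeqLT.empty ν.ord ν.ord) A ∨ WinIIStrat (SeqLT.empty ν.ord ν.ord) A := by
  obtain ⟨U, hU, F, hF, hAU⟩ := hA
  have hpos : 0 < ν.ord := (Cardinal.isSuccLimit_ord hreg.aleph0_le).bot_lt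
  rcases U.eq_empty_or_nonempty with rfl | ⟨x, hx⟩
  · refine .inr (winIIStrat_of_meagerIn_univ hreg hpos _ ⟨F, hF, ?_⟩)
    rwa [← bot_eq_empty, symmDiff_bot] at hAU
  · obtain ⟨_, ⟨s, rfl⟩, -, hsU⟩ := isTopologicalBasis_basicOpen.exists_subset_of_mem_open hx hU
    refine .inl (winIStrat_of_basicOpen_diff_subset hreg hpos (fun i => (hF i).isNowhereDense)
      (SeqLT.empty_le s) fun y ⟨hys, hyF⟩ => ?_)
    by_contra hyA
    have hy : y ∈ symmDiff A U ∩ univ := ⟨Or.inr ⟨hsU hys, hyA⟩, mem_univ y⟩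
    exact hyF (hAU ▸ hy)

/-- For an infinite regular cardinal `ν` with `ν^{<ν} = ν`, the Banach–Mazur game `G_ν(A)`
is determined for every `ν`-Baire subset `A` of `ν^ν`. -/
theorem statement17 (ν : Cardinal.{u}) (hreg : ν.IsRegular)
    (hpow : Cardinal.powerlt ν ν = ν)
    (A : Set (SeqFull ν.ord ν.ord)) (hA : BaireSet A) :
    WinIStrat (SeqLT.empty ν.ord ν.ord) A ∨ WinIIStrat (SeqLT.empty ν.ord ν.ord) A :=
  statement17_general ν hreg A hA

end
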